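/- For every integer i >= 1, the generating series M_i(t) of Motzkin walks of increment i, counted by length, equals (1 + B(t)) * U(t)^i, where B is the bridge series and U the primitive walk series. -/

import Mathlib

open PowerSeries

/-- A Motzkin walk: a finite sequence of steps in `{-1, 0, +1}`. -/
def IsMotzkin (w : List ℤ) : Prop := ∀ x ∈ w, x = -1 ∨ x = 0 ∨ x = 1

/-- The increment of a walk: the sum of its steps. -/
def increment (w : List ℤ) : ℤ := w.sum

/-- A Motzkin walk is primitive if its increment is `-1` while every proper prefix
has nonnegative increment. -/
def IsPrimitive (w : List ℤ) : Prop :=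
  increment w = -1 ∧ ∀ k < w.length, 0 ≤ increment (w.take k)

/-- The generating series of nonempty primitive Motzkin walks, by length. -/
noncomputable def U : PowerSeries ℚ :=
  PowerSeries.mk fun n =>
    (Nat.card {w : List ℤ // IsMotzkin w ∧ IsPrimitive w ∧ w.length = n ∧ w ≠ []} : ℚ)

/-- The generating series of nonempty Motzkin bridges (walks of increment `0`),
by length. -/
noncomputable def B : PowerSeries ℚ :=
  PowerSeries.mk fun n =>
    (Nat.card {w : List ℤ // IsMotzkin w ∧ increment w = 0 ∧ w.length = n ∧ w ≠ []} : ℚ)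

/-- The generating series of Motzkin walks of increment `i`, by length. -/
noncomputable def M (i : ℤ) : PowerSeries ℚ :=
  PowerSeries.mk fun n =>
    (Nat.card {w : List ℤ // IsMotzkin w ∧ increment w = i ∧ w.length = n} : ℚ)

/-!
The step set is symmetric, so `M i = M (-i)`, and it suffices to treat negative increments.
A walk of increment `i - 1 < 0` is cut at the first time it reaches level `-1`: this splits it
uniquely into a primitive walk followed by a walk of increment `i`, so `M (i - 1) = U * M i`.
Since `M 0 = 1 + B`, induction gives `M (-i) = (1 + B) * U ^ i`.
-/

open Finset

section Walks

variable {u v w : List ℤ}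

lemma isMotzkin_append : IsMotzkin (u ++ v) ↔ IsMotzkin u ∧ IsMotzkin v :=
  List.forall_mem_append

lemma isMotzkin_map_neg : IsMotzkin (w.map Neg.neg) ↔ IsMotzkin w := by
  simp only [IsMotzkin, List.forall_mem_map]
  exact forall₂_congr fun x _ => by omega

lemma increment_map_neg : increment (w.map Neg.neg) = -increment w :=
  (List.sum_neg w).symm

lemma increment_append : increment (u ++ v) = increment u + increment v :=
  List.sum_append

lemma setOf_isMotzkin_length_finite (n : ℕ) :
    {w : List ℤ | IsMotzkin w ∧ w.length = n}.Finite := by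
  refine ((List.finite_length_eq ({-1, 0, 1} : Set ℤ) n).image (List.map Subtype.val)).subset ?_
  rintro w ⟨hm, rfl⟩
  lift w to List ({-1, 0, 1} : Set ℤ) using hm
  exact ⟨w, by simp, rfl⟩

lemma IsPrimitive.ne_nil (hu : IsPrimitive u) : u ≠ [] := by
  rintro rfl
  simp [IsPrimitive, increment] at hu

lemma IsPrimitive.eq_of_prefix (hu : IsPrimitive u) (hv : IsPrimitive v) (huv : u <+: v) :
    u = v := by
  refine huv.eq_of_length (le_antisymm huv.length_le (not_lt.mp fun hlt => ?_))
  have h := hv.2 u.length hlt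
  rw [← List.prefix_iff_eq_take.mp huv, hu.1] at h
  omega

lemma IsPrimitive.append_inj {u₁ v₁ u₂ v₂ : List ℤ} (hu₁ : IsPrimitive u₁)
    (hu₂ : IsPrimitive u₂) (h : u₁ ++ v₁ = u₂ ++ v₂) : u₁ = u₂ ∧ v₁ = v₂ := by
  have hu : u₁ = u₂ := by
    rcases List.prefix_or_prefix_of_prefix (List.prefix_append u₁ v₁)
        (h ▸ List.prefix_append u₂ v₂) with h₁₂ | h₂₁
    · exact hu₁.eq_of_prefix hu₂ h₁₂
    · exact (hu₂.eq_of_prefix hu₁ h₂₁).symm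
  subst hu
  exact ⟨rfl, List.append_cancel_left h⟩

/-- The prefix ends at the first time the walk reaches level `-1`; it cannot jump over that
level since its steps are at most `1` in absolute value. -/
lemma IsMotzkin.exists_isPrimitive_prefix (hm : IsMotzkin w) (hw : increment w < 0) :
    ∃ u v, w = u ++ v ∧ IsPrimitive u := by
  have hex : ∃ k, increment (w.take k) < 0 := ⟨w.length, by rwa [List.take_length]⟩
  have hmin : ∀ l < Nat.find hex, 0 ≤ increment (w.take l) :=
    fun l hl => not_lt.mp (Nat.find_min hex hl)
  obtain ⟨m, hm_eq⟩ : ∃ m, Nat.find hex = m + 1 :=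
    Nat.exists_eq_succ_of_ne_zero fun h0 => by
      simpa [increment] using (Nat.find_eq_zero hex).mp h0
  have hlen : m < w.length := by
    by_contra! hle
    have := hmin m (by omega)
    rw [List.take_of_length_le hle] at this
    omega
  have hstep : increment (w.take (m + 1)) = increment (w.take m) + w[m] :=
    List.sum_take_succ w m hlen
  have hfirst : increment (w.take (m + 1)) = -1 := by
    have hneg := hm_eq ▸ Nat.find_spec hex
    have hm0 := hmin m (by omega)
    rcases hm _ (List.getElem_mem hlen) with h | h | h <;> omega
  refine ⟨w.take (m + 1), w.drop (m + 1), (List.take_append_drop _ _).symm, hfirst, ?_⟩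
  intro l hl
  rw [List.length_take] at hl
  rw [List.take_take, min_eq_left (by omega)]
  exact hmin l (by omega)

end Walks

def walks (i : ℤ) (n : ℕ) : Set (List ℤ) :=
  {w | IsMotzkin w ∧ increment w = i ∧ w.length = n}

def primitiveWalks (n : ℕ) : Set (List ℤ) :=
  {w | IsMotzkin w ∧ IsPrimitive w ∧ w.length = n ∧ w ≠ []}

instance (i : ℤ) (n : ℕ) : Finite (walks i n) :=
  ((setOf_isMotzkin_length_finite n).subset fun _ hw => ⟨hw.1, hw.2.2⟩).to_subtype

instance (n : ℕ) : Finite (primitiveWalks n) :=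
  ((setOf_isMotzkin_length_finite n).subset fun _ hw => ⟨hw.1, hw.2.2.1⟩).to_subtype

lemma coeff_M (i : ℤ) (n : ℕ) : coeff n (M i) = Nat.card (walks i n) :=
  coeff_mk _ _

lemma coeff_U (n : ℕ) : coeff n U = Nat.card (primitiveWalks n) :=
  coeff_mk _ _

lemma M_neg (i : ℤ) : M (-i) = M i := by
  ext n
  rw [coeff_M, coeff_M]
  congr 1
  refine Nat.card_congr <| Equiv.subtypeEquiv
    (Function.Involutive.toPerm (List.map Neg.neg) fun w => by simp) fun w => ?_
  show _ ↔ w.map Neg.neg ∈ walks i n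
  simp [walks, isMotzkin_map_neg, increment_map_neg, neg_eq_iff_eq_neg]

lemma M_zero : M 0 = 1 + B := by
  ext n
  rw [coeff_M, map_add, coeff_one, B, coeff_mk]
  rcases n with _ | n
  · have hnil : walks 0 0 = {[]} := by
      ext w
      refine ⟨fun hw => List.eq_nil_of_length_eq_zero hw.2.2, ?_⟩
      rintro rfl
      exact ⟨by simp [IsMotzkin], rfl, rfl⟩
    simp [hnil]
  · have hne : walks 0 (n + 1) =
        {w | IsMotzkin w ∧ increment w = 0 ∧ w.length = n + 1 ∧ w ≠ []} :=
      Set.ext fun w => and_congr_right fun _ => and_congr_right fun _ =>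
        (and_iff_left_of_imp List.ne_nil_of_length_eq_add_one).symm
    rw [hne, if_neg n.succ_ne_zero, zero_add]
    rfl

lemma append_mem_walks {u v : List ℤ} {i : ℤ} {a b : ℕ} (hu : u ∈ primitiveWalks a)
    (hv : v ∈ walks i b) : u ++ v ∈ walks (i - 1) (a + b) := by
  obtain ⟨hum, hup, rfl, -⟩ := hu
  obtain ⟨hvm, rfl, rfl⟩ := hv
  refine ⟨isMotzkin_append.mpr ⟨hum, hvm⟩, ?_, List.length_append⟩
  rw [increment_append, hup.1]
  ring

/-- Cutting a walk of increment `i - 1 < 0` where it first reaches level `-1`. -/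
noncomputable def firstPassageEquiv (i : ℤ) (hi : i ≤ 0) (n : ℕ) :
    (Σ p : antidiagonal n, primitiveWalks p.1.1 × walks i p.1.2) ≃ walks (i - 1) n :=
  Equiv.ofBijective
    (fun x => ⟨x.2.1 ++ x.2.2, by
      simpa only [mem_antidiagonal.mp x.1.2] using append_mem_walks x.2.1.2 x.2.2.2⟩)
    ⟨by
      intro x y h
      obtain ⟨⟨⟨a₁, b₁⟩, _⟩, ⟨u₁, hu₁⟩, ⟨v₁, hv₁⟩⟩ := x
      obtain ⟨⟨⟨a₂, b₂⟩, _⟩, ⟨u₂, hu₂⟩, ⟨v₂, hv₂⟩⟩ := y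
      obtain ⟨rfl, rfl⟩ := hu₁.2.1.append_inj hu₂.2.1 (congrArg Subtype.val h)
      obtain rfl : a₁ = a₂ := hu₁.2.2.1.symm.trans hu₂.2.2.1
      obtain rfl : b₁ = b₂ := hv₁.2.2.symm.trans hv₂.2.2
      rfl,
    by
      rintro ⟨w, hm, hw, rfl⟩
      obtain ⟨u, v, rfl, hu⟩ := hm.exists_isPrimitive_prefix (by omega)
      obtain ⟨hum, hvm⟩ := isMotzkin_append.mp hm
      have hv : increment v = i := by rw [increment_append, hu.1] at hw; omega
      exact ⟨⟨⟨(u.length, v.length), mem_antidiagonal.mpr List.length_append.symm⟩,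
        ⟨u, hum, hu, rfl, hu.ne_nil⟩, ⟨v, hvm, hv, rfl⟩⟩, rfl⟩⟩

lemma M_sub_one (i : ℤ) (hi : i ≤ 0) : M (i - 1) = U * M i := by
  ext n
  rw [coeff_M, ← Nat.card_congr (firstPassageEquiv i hi n), Nat.card_sigma, coeff_mul]
  push_cast [Nat.card_prod, coeff_U, coeff_M]
  exact sum_coe_sort (antidiagonal n) fun p =>
    (Nat.card (primitiveWalks p.1) : ℚ) * Nat.card (walks i p.2)

lemma M_neg_natCast (i : ℕ) : M (-i) = (1 + B) * U ^ i := by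
  induction i with
  | zero => simpa using M_zero
  | succ i ih =>
    rw [Nat.cast_succ, neg_add, ← sub_eq_add_neg, M_sub_one _ (by omega), ih]
    ring

theorem stmt_10_general (i : ℕ) :
    M (i : ℤ) = (1 + B) * U ^ i := by
  rw [← M_neg, M_neg_natCast]

/-- For every integer `i ≥ 1`, the generating series `M_i(t)` of
Motzkin walks of increment `i`, counted by length, equals `(1 + B(t)) · U(t)^i`. -/
theorem stmt_10 (i : ℕ) (hi : 1 ≤ i) :
    M (i : ℤ) = (1 + B) * U ^ i :=
  stmt_10_general i
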